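/- arXiv:2509.04509 — 8 statements merged into one kernel-verified Lean document; each statement's English description precedes it below -/
import Mathlib

section
/- In the alignment game on [0,1] with payoff equal to the Lebesgue measure of the symmetric difference of the players' chosen subintervals, the mixed strategy choosing [0,1/2] and [1/2,1] each with probability 1/2 guarantees expected payoff exactly 1/2 against any subinterval I ⊆ [0,1]: that is, (1/2)·λ(I Δ [0,1/2]) + (1/2)·λ(I Δ [1/2,1]) = 1/2 for every interval I ⊆ [0,1]. -/
open MeasureTheory

lemma vol_sd (a b c d : ℝ) (hab : a ≤ b) (hcd : c ≤ d) :
    (volume (symmDiff (Set.Icc a b) (Set.Icc c d))).toReal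
      = (b - a) + (d - c) - 2 * max (min b d - max a c) 0 := by
  have hmeas : MeasurableSet (Set.Icc c d) := measurableSet_Icc
  have hmeas' : MeasurableSet (Set.Icc a b) := measurableSet_Icc
  have hint : Set.Icc a b ∩ Set.Icc c d = Set.Icc (max a c) (min b d) :=
    Set.Icc_inter_Icc
  have hint' : Set.Icc c d ∩ Set.Icc a b = Set.Icc (max a c) (min b d) := by
    rw [Set.inter_comm]; exact hint
  have h1 : volume (Set.Icc a b \ Set.Icc c d) + ENNReal.ofReal (min b d - max a c)
      = ENNReal.ofReal (b - a) := by
    rw [← Real.volume_Icc, ← hint, measure_diff_add_inter _ hmeas, Real.volume_Icc]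
  have h2 : volume (Set.Icc c d \ Set.Icc a b) + ENNReal.ofReal (min b d - max a c)
      = ENNReal.ofReal (d - c) := by
    rw [← Real.volume_Icc, ← hint', measure_diff_add_inter _ hmeas', Real.volume_Icc]
  rw [symmDiff_def]
  have hdisj : Disjoint (Set.Icc a b \ Set.Icc c d) (Set.Icc c d \ Set.Icc a b) :=
    disjoint_sdiff_sdiff
  rw [show (Set.Icc a b \ Set.Icc c d ⊔ Set.Icc c d \ Set.Icc a b) = (Set.Icc a b \ Set.Icc c d) ∪ (Set.Icc c d \ Set.Icc a b) from rfl, measure_union hdisj (hmeas.diff hmeas')]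
  have f1 : volume (Set.Icc a b \ Set.Icc c d) ≠ ⊤ := by
    intro h; rw [h] at h1; simp at h1
  have f2 : volume (Set.Icc c d \ Set.Icc a b) ≠ ⊤ := by
    intro h; rw [h] at h2; simp at h2
  have t1 := congrArg ENNReal.toReal h1
  have t2 := congrArg ENNReal.toReal h2
  rw [ENNReal.toReal_add f1 ENNReal.ofReal_ne_top, ENNReal.toReal_ofReal',
    ENNReal.toReal_ofReal'] at t1
  rw [ENNReal.toReal_add f2 ENNReal.ofReal_ne_top, ENNReal.toReal_ofReal',
    ENNReal.toReal_ofReal'] at t2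
  rw [ENNReal.toReal_add f1 f2]
  have hmb : max (b - a) 0 = b - a := max_eq_left (by linarith)
  have hmd : max (d - c) 0 = d - c := max_eq_left (by linarith)
  rw [hmb] at t1; rw [hmd] at t2
  linarith

theorem stmt_3 (a b : ℝ) (ha : 0 ≤ a) (hab : a ≤ b) (hb : b ≤ 1) :
    (1/2 : ℝ) * (volume (symmDiff (Set.Icc a b) (Set.Icc (0:ℝ) (1/2)))).toReal
      + (1/2 : ℝ) * (volume (symmDiff (Set.Icc a b) (Set.Icc (1/2:ℝ) 1))).toReal
      = 1/2 := by
  rw [vol_sd a b 0 (1/2) hab (by norm_num), vol_sd a b (1/2) 1 hab (by norm_num)]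
  rw [max_eq_left ha, min_eq_left hb]
  rcases le_total b (1/2) with hb2 | hb2
  · have ha2 : a ≤ 1/2 := le_trans hab hb2
    rw [min_eq_left hb2, max_eq_right ha2, max_eq_left (by linarith),
      max_eq_right (by linarith)]
    ring
  · rw [min_eq_right hb2]
    rcases le_total a (1/2) with ha2 | ha2
    · rw [max_eq_right ha2, max_eq_left (by linarith), max_eq_left (by linarith)]
      ring
    · rw [max_eq_left ha2, max_eq_right (by linarith), max_eq_left (by linarith)]
      ring
end

section
/- Let α ∈ [1/2, 1]. In the game on [0,1] where the Hider chooses an interval of length α, the Searcher chooses any subinterval, and the payoff is the measure of the symmetric difference: the Hider strategy choosing [0,α] and [1−α,1] each with probability 1/2 guarantees expected payoff at least 1−α against every Searcher interval, and the Searcher strategy S = [0,1] guarantees payoff exactly 1−α against every Hider interval of length α. Hence the value is 1−α. -/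
open MeasureTheory

lemma vol_symmDiff_Icc (a b c d : ℝ) :
    (volume (symmDiff (Set.Icc c d) (Set.Icc a b))).toReal
      = max (d - c) 0 + max (b - a) 0 - 2 * max (min d b - max c a) 0 := by
  set A := Set.Icc c d with hA
  set B := Set.Icc a b with hB
  have hAB : A ∩ B = Set.Icc (max c a) (min d b) := Set.Icc_inter_Icc
  have hvI : volume (A ∩ B) ≠ ⊤ := by rw [hAB]; exact (measure_Icc_lt_top).ne
  have hvA : volume A ≠ ⊤ := (measure_Icc_lt_top).ne
  have hvB : volume B ≠ ⊤ := (measure_Icc_lt_top).ne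
  have h1 : A \ B = A \ (A ∩ B) := by rw [Set.diff_self_inter]
  have h2 : B \ A = B \ (A ∩ B) := by rw [Set.inter_comm, Set.diff_self_inter]
  have hd : volume (A \ B) = volume A - volume (A ∩ B) := by
    rw [h1]; exact measure_diff Set.inter_subset_left
      ((measurableSet_Icc.inter measurableSet_Icc).nullMeasurableSet) hvI
  have hd' : volume (B \ A) = volume B - volume (A ∩ B) := by
    rw [h2]; exact measure_diff Set.inter_subset_right
      ((measurableSet_Icc.inter measurableSet_Icc).nullMeasurableSet) hvI
  have hsd : volume (symmDiff A B)
      = (volume A - volume (A ∩ B)) + (volume B - volume (A ∩ B)) := by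
    rw [Set.symmDiff_def, measure_union (disjoint_sdiff_sdiff)
      (measurableSet_Icc.diff measurableSet_Icc), hd, hd']
  have hle1 : volume (A ∩ B) ≤ volume A := measure_mono Set.inter_subset_left
  have hle2 : volume (A ∩ B) ≤ volume B := measure_mono Set.inter_subset_right
  rw [hsd, ENNReal.toReal_add (tsub_le_self.trans_lt hvA.lt_top).ne
      (tsub_le_self.trans_lt hvB.lt_top).ne,
    ENNReal.toReal_sub_of_le hle1 hvA, ENNReal.toReal_sub_of_le hle2 hvB, hAB, hA, hB,
    Real.volume_Icc, Real.volume_Icc, Real.volume_Icc,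
    ENNReal.toReal_ofReal', ENNReal.toReal_ofReal', ENNReal.toReal_ofReal']
  ring

theorem stmt_4 (α : ℝ) (hα : α ∈ Set.Icc (1/2 : ℝ) 1) :
    -- Hider guarantee: mixing [0,α] and [1-α,1] equiprobably yields ≥ 1-α
    (∀ S : Set ℝ, (∃ a b : ℝ, S = Set.Icc a b) → S ⊆ Set.Icc (0:ℝ) 1 →
      1 - α ≤ (1/2 : ℝ) * (volume (symmDiff (Set.Icc (0:ℝ) α) S)).toReal
              + (1/2 : ℝ) * (volume (symmDiff (Set.Icc (1-α) 1) S)).toReal) ∧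
    -- Searcher guarantee: S = [0,1] yields exactly 1-α against every H of length α
    (∀ x : ℝ, 0 ≤ x → x + α ≤ 1 →
      (volume (symmDiff (Set.Icc x (x+α)) (Set.Icc (0:ℝ) 1))).toReal = 1 - α) := by
  obtain ⟨hα1, hα2⟩ := hα
  have hα0 : (0:ℝ) ≤ α := by linarith
  constructor
  · rintro S ⟨a, b, rfl⟩ hsub
    rw [vol_symmDiff_Icc, vol_symmDiff_Icc]
    have e4 : max (α - 0) 0 = α := by rw [sub_zero]; exact max_eq_left hα0
    have e5 : max (1 - (1 - α)) 0 = α := by rw [show (1:ℝ) - (1-α) = α by ring]; exact max_eq_left hα0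
    rw [e4, e5]
    rcases le_total a b with hab | hab
    · obtain ⟨ha0, hb1⟩ := (Set.Icc_subset_Icc_iff hab).mp hsub
      rw [min_eq_right hb1, max_eq_right ha0, max_eq_left (by linarith : (0:ℝ) ≤ b - a)]
      simp only [min_def, max_def]
      split_ifs <;> linarith
    · have e1 : max (b - a) 0 = 0 := max_eq_right (by linarith)
      have e2 : max (min α b - max 0 a) 0 = 0 := max_eq_right (by
        have h := min_le_right α b; have h' := le_max_right 0 a; linarith)
      have e3 : max (min 1 b - max (1-α) a) 0 = 0 := max_eq_right (by
        have h := min_le_right 1 b; have h' := le_max_right (1-α) a; linarith)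
      rw [e1, e2, e3]; linarith
  · intro x hx0 hx1
    rw [vol_symmDiff_Icc, min_eq_left hx1, max_eq_left hx0,
      show x + α - x = α by ring, max_eq_left hα0,
      show (1:ℝ) - 0 = 1 by ring, max_eq_left (by norm_num : (0:ℝ) ≤ 1)]
    ring
end

section
/- Let α ∈ [0, 1/2]. In the alignment game on [0,1] where the Hider chooses an interval of length α and the Searcher chooses any subinterval, with payoff λ(H Δ S): the Hider strategy mixing [0,α] and [1−α,1] equiprobably guarantees expected payoff at least α against every Searcher interval, and S = ∅ guarantees payoff exactly α. The value is α. -/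
open MeasureTheory

theorem stmt_5 (α : ℝ) (hα : α ∈ Set.Icc (0:ℝ) (1/2)) :
    -- Hider guarantee: mixing [0,α] and [1-α,1] equiprobably yields ≥ α
    (∀ S : Set ℝ, (∃ a b : ℝ, S = Set.Icc a b) → S ⊆ Set.Icc (0:ℝ) 1 →
      α ≤ (1/2 : ℝ) * (volume (symmDiff (Set.Icc (0:ℝ) α) S)).toReal
          + (1/2 : ℝ) * (volume (symmDiff (Set.Icc (1-α) 1) S)).toReal) ∧
    -- Searcher guarantee: S = ∅ yields exactly α against every H of length α
    (∀ x : ℝ, 0 ≤ x → x + α ≤ 1 →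
      (volume (symmDiff (Set.Icc x (x+α)) (∅ : Set ℝ))).toReal = α) := by
  obtain ⟨hα0, hα2⟩ := hα
  constructor
  · intro S hS hsub
    set H1 : Set ℝ := Set.Icc (0:ℝ) α with hH1
    set H2 : Set ℝ := Set.Icc (1-α) 1 with hH2
    have h1sub : H1 ⊆ Set.Icc (0:ℝ) 1 := Set.Icc_subset_Icc le_rfl (by linarith)
    have h2sub : H2 ⊆ Set.Icc (0:ℝ) 1 := Set.Icc_subset_Icc (by linarith) le_rfl
    -- finiteness
    have hfin1 : volume (symmDiff H1 S) ≠ ⊤ := by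
      have : symmDiff H1 S ⊆ Set.Icc (0:ℝ) 1 := by
        intro y hy
        rcases hy with h | h
        · exact h1sub h.1
        · exact hsub h.1
      have hle := measure_mono (μ := volume) this
      rw [Real.volume_Icc] at hle
      exact ne_top_of_le_ne_top (by simp) hle
    have hfin2 : volume (symmDiff H2 S) ≠ ⊤ := by
      have : symmDiff H2 S ⊆ Set.Icc (0:ℝ) 1 := by
        intro y hy
        rcases hy with h | h
        · exact h2sub h.1
        · exact hsub h.1
      have hle := measure_mono (μ := volume) this
      rw [Real.volume_Icc] at hle
      exact ne_top_of_le_ne_top (by simp) hle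
    -- intersection of H1 and H2 has measure zero
    have hinter : volume (H1 ∩ H2) = 0 := by
      rw [hH1, hH2, Set.Icc_inter_Icc, Real.volume_Icc]
      apply ENNReal.ofReal_eq_zero.mpr
      have h1 : min α 1 ≤ α := min_le_left _ _
      have h2 : (1 - α : ℝ) ≤ max 0 (1-α) := le_max_right _ _
      linarith
    -- measure of union
    have hunion : volume (H1 ∪ H2) = ENNReal.ofReal (2*α) := by
      have := measure_union_add_inter (μ := volume) H1 (measurableSet_Icc (a := (1-α:ℝ)) (b := 1))
      rw [hinter, add_zero] at this
      simp only [hH1, hH2] at this ⊢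
      rw [this, Real.volume_Icc, Real.volume_Icc]
      rw [← ENNReal.ofReal_add (by linarith) (by linarith)]
      ring_nf
    -- key inequality in ENNReal
    have key : ENNReal.ofReal (2*α) ≤ volume (symmDiff H1 S) + volume (symmDiff H2 S) := by
      have h1 : ENNReal.ofReal (2*α) ≤ volume (symmDiff H1 H2) := by
        rw [symmDiff_eq_sup_sdiff_inf]
        calc ENNReal.ofReal (2*α) = volume (H1 ∪ H2) - volume (H1 ∩ H2) := by
              rw [hinter, hunion, tsub_zero]
          _ ≤ volume ((H1 ⊔ H2) \ (H1 ⊓ H2)) := le_measure_diff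
      have h2 : volume (symmDiff H1 H2) ≤ volume (symmDiff H1 S) + volume (symmDiff S H2) := by
        calc volume (symmDiff H1 H2) ≤ volume (symmDiff H1 S ∪ symmDiff S H2) :=
              measure_mono (symmDiff_triangle H1 S H2)
          _ ≤ _ := measure_union_le _ _
      rw [symmDiff_comm S H2] at h2
      exact h1.trans h2
    have hadd : volume (symmDiff H1 S) + volume (symmDiff H2 S) ≠ ⊤ :=
      ENNReal.add_ne_top.mpr ⟨hfin1, hfin2⟩
    have := ENNReal.toReal_mono hadd key
    rw [ENNReal.toReal_ofReal (by linarith), ENNReal.toReal_add hfin1 hfin2] at this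
    linarith
  · intro x hx hxα
    have : symmDiff (Set.Icc x (x+α)) (∅ : Set ℝ) = Set.Icc x (x+α) := by
      simp [symmDiff]
    rw [this, Real.volume_Icc, add_sub_cancel_left, ENNReal.toReal_ofReal hα0]
end

section
/- Let Q = {1,…,n} with positive costs c_j and penalties π_j, and f(A) = Σ_{B ⊆ A} Π_{j∈B}(c_j/π_j). If the Hider chooses each subset H ⊆ Q with probability p_H = (1/f(Q))·Π_{j∈H}(c_j/π_j), then for every Searcher subset S ⊆ Q the expected payoff Σ_H p_H (c(S∖H) + π(H∖S)) equals V = Σ_{j∈Q} c_j · f(Q∖{j})/f(Q); in particular this quantity is independent of S. -/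
open Finset

theorem stmt_8 (n : ℕ) (c q : Fin n → ℝ) (hc : ∀ j, 0 < c j) (hq : ∀ j, 0 < q j) :
    let f : Finset (Fin n) → ℝ := fun A => ∑ B ∈ A.powerset, ∏ j ∈ B, c j / q j
    let p : Finset (Fin n) → ℝ := fun H => (∏ j ∈ H, c j / q j) / f univ
    ∀ S : Finset (Fin n),
      ∑ H ∈ (univ : Finset (Fin n)).powerset,
          p H * ((∑ j ∈ S \ H, c j) + ∑ j ∈ H \ S, q j)
        = ∑ j : Fin n, c j * f (univ.erase j) / f univ := by
  intro f p S
  set w : Finset (Fin n) → ℝ := fun H => ∏ j ∈ H, c j / q j with hw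
  have hF : 0 < f univ := by
    apply Finset.sum_pos
    · intro B _
      exact Finset.prod_pos fun j _ => div_pos (hc j) (hq j)
    · exact ⟨∅, Finset.mem_powerset.mpr (Finset.empty_subset _)⟩
  have L1 : ∀ j : Fin n,
      ∑ H ∈ univ.powerset.filter (fun H => j ∉ H), w H = f (univ.erase j) := by
    intro j
    apply Finset.sum_congr _ (fun _ _ => rfl)
    ext H
    simp [Finset.subset_erase]
  have L2 : ∀ j : Fin n,
      ∑ H ∈ univ.powerset.filter (fun H => j ∈ H), w H
        = (c j / q j) * f (univ.erase j) := by
    intro j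
    have hsplit := Finset.sum_filter_add_sum_filter_not univ.powerset
      (fun H => j ∈ H) w
    rw [L1 j] at hsplit
    have hins : f univ = f (univ.erase j) + (c j / q j) * f (univ.erase j) := by
      have h1 : (univ : Finset (Fin n)) = insert j (univ.erase j) :=
        (Finset.insert_erase (mem_univ j)).symm
      calc f univ = ∑ B ∈ (insert j (univ.erase j)).powerset, w B := by rw [← h1]
        _ = ∑ B ∈ (univ.erase j).powerset, w B
            + ∑ B ∈ (univ.erase j).powerset, w (insert j B) := by
            rw [Finset.sum_powerset_insert (Finset.notMem_erase j univ)]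
        _ = f (univ.erase j) + (c j / q j) * f (univ.erase j) := by
            congr 1
            rw [Finset.mul_sum]
            refine Finset.sum_congr rfl fun B hB => ?_
            have hjB : j ∉ B := fun h =>
              Finset.notMem_erase j univ (Finset.mem_powerset.mp hB h)
            simp only [hw, Finset.prod_insert hjB]

    linarith
  have key : ∑ H ∈ (univ : Finset (Fin n)).powerset,
      w H * ((∑ j ∈ S \ H, c j) + ∑ j ∈ H \ S, q j)
      = ∑ j : Fin n, c j * f (univ.erase j) := by
    have step1 : ∀ H : Finset (Fin n),
        w H * ((∑ j ∈ S \ H, c j) + ∑ j ∈ H \ S, q j)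
        = ∑ j : Fin n, ((if j ∈ S \ H then w H * c j else 0)
            + (if j ∈ H \ S then w H * q j else 0)) := by
      intro H
      rw [Finset.sum_add_distrib, Finset.sum_ite_mem, Finset.sum_ite_mem,
        Finset.univ_inter, Finset.univ_inter, mul_add, Finset.mul_sum,
        Finset.mul_sum]
    calc ∑ H ∈ (univ : Finset (Fin n)).powerset,
        w H * ((∑ j ∈ S \ H, c j) + ∑ j ∈ H \ S, q j)
        = ∑ H ∈ (univ : Finset (Fin n)).powerset, ∑ j : Fin n,
            ((if j ∈ S \ H then w H * c j else 0)
              + (if j ∈ H \ S then w H * q j else 0)) := by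
          exact Finset.sum_congr rfl fun H _ => step1 H
      _ = ∑ j : Fin n, ∑ H ∈ (univ : Finset (Fin n)).powerset,
            ((if j ∈ S \ H then w H * c j else 0)
              + (if j ∈ H \ S then w H * q j else 0)) := Finset.sum_comm
      _ = ∑ j : Fin n, c j * f (univ.erase j) := by
          refine Finset.sum_congr rfl fun j _ => ?_
          rw [Finset.sum_add_distrib]
          by_cases hjS : j ∈ S
          · have h1 : ∑ H ∈ (univ : Finset (Fin n)).powerset,
                (if j ∈ S \ H then w H * c j else 0)
                = c j * ∑ H ∈ univ.powerset.filter (fun H => j ∉ H), w H := by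
              rw [Finset.sum_filter, Finset.mul_sum]
              refine Finset.sum_congr rfl fun H _ => ?_
              simp [Finset.mem_sdiff, hjS, mul_comm]
            have h2 : ∑ H ∈ (univ : Finset (Fin n)).powerset,
                (if j ∈ H \ S then w H * q j else 0) = 0 := by
              apply Finset.sum_eq_zero
              intro H _
              simp [Finset.mem_sdiff, hjS]
            rw [h1, h2, L1 j, add_zero]
          · have h1 : ∑ H ∈ (univ : Finset (Fin n)).powerset,
                (if j ∈ S \ H then w H * c j else 0) = 0 := by
              apply Finset.sum_eq_zero
              intro H _
              simp [Finset.mem_sdiff, hjS]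
            have h2 : ∑ H ∈ (univ : Finset (Fin n)).powerset,
                (if j ∈ H \ S then w H * q j else 0)
                = q j * ∑ H ∈ univ.powerset.filter (fun H => j ∈ H), w H := by
              rw [Finset.sum_filter, Finset.mul_sum]
              refine Finset.sum_congr rfl fun H _ => ?_
              simp [Finset.mem_sdiff, hjS, mul_comm]
            rw [h1, h2, L2 j, zero_add]
            field_simp [(hq j).ne']
  have plhs : ∀ H, p H * ((∑ j ∈ S \ H, c j) + ∑ j ∈ H \ S, q j)
      = w H * ((∑ j ∈ S \ H, c j) + ∑ j ∈ H \ S, q j) / f univ := by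
    intro H
    simp only [p, hw]
    ring
  calc ∑ H ∈ (univ : Finset (Fin n)).powerset,
      p H * ((∑ j ∈ S \ H, c j) + ∑ j ∈ H \ S, q j)
      = (∑ H ∈ (univ : Finset (Fin n)).powerset,
          w H * ((∑ j ∈ S \ H, c j) + ∑ j ∈ H \ S, q j)) / f univ := by
        rw [Finset.sum_div]
        exact Finset.sum_congr rfl fun H _ => plhs H
    _ = (∑ j : Fin n, c j * f (univ.erase j)) / f univ := by rw [key]
    _ = ∑ j : Fin n, c j * f (univ.erase j) / f univ := by rw [Finset.sum_div]
end

section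
/- Suppose c_1 ≥ … ≥ c_n > 0 and 1 ≤ k ≤ n/2. In the game Γ([n]^(k), 2^[n]) where the Hider picks a k-subset and the Searcher any subset, with payoff c(H Δ S): the Hider strategy choosing a fixed k-subset H̃ ⊆ [2k] and its complement [2k]∖H̃ each with probability 1/2 guarantees expected payoff at least c([2k])/2 against every Searcher set, and hence the value V_k satisfies V_k ≥ c([2k])/2, where c([2k]) = Σ_{i=1}^{2k} c_i. -/
open Finset

/-- Weighted symmetric-difference payoff `c(H Δ S)` (0-indexed locations). -/
def payoff (c : ℕ → ℝ) (H S : Finset ℕ) : ℝ := ∑ j ∈ (H \ S) ∪ (S \ H), c j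

theorem stmt_14 (n k : ℕ) (c : ℕ → ℝ)
    (hpos : ∀ i < n, 0 < c i)
    (hsort : ∀ i j, i ≤ j → j < n → c j ≤ c i)
    (hk : 1 ≤ k) (hkn : 2*k ≤ n)
    (Ht : Finset ℕ) (hH : Ht ⊆ Finset.range (2*k)) (hcard : Ht.card = k) :
    ∀ S ⊆ Finset.range n,
      (∑ i ∈ Finset.range (2*k), c i) / 2
        ≤ (1/2 : ℝ) * payoff c Ht S
          + (1/2 : ℝ) * payoff c (Finset.range (2*k) \ Ht) S := by
  intro S hS
  set C := Finset.range (2*k) \ Ht with hC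
  have hsubn : Finset.range (2*k) ⊆ Finset.range n := Finset.range_subset_range.2 hkn
  have hnonneg : ∀ j ∈ Finset.range n, 0 ≤ c j :=
    fun j hj => (hpos j (Finset.mem_range.1 hj)).le
  set T1 := ((Ht \ S) ∪ (S \ Ht)) ∩ Finset.range (2*k) with hT1
  set T2 := ((C \ S) ∪ (S \ C)) ∩ Finset.range (2*k) with hT2
  have h1 : ∑ j ∈ T1, c j ≤ payoff c Ht S := by
    apply Finset.sum_le_sum_of_subset_of_nonneg Finset.inter_subset_left
    intro j hj _
    refine hnonneg j ?_
    rcases Finset.mem_union.1 hj with h | h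
    · exact hsubn (hH (Finset.mem_sdiff.1 h).1)
    · exact hS (Finset.mem_sdiff.1 h).1
  have h2 : ∑ j ∈ T2, c j ≤ payoff c C S := by
    apply Finset.sum_le_sum_of_subset_of_nonneg Finset.inter_subset_left
    intro j hj _
    refine hnonneg j ?_
    rcases Finset.mem_union.1 hj with h | h
    · exact hsubn (Finset.mem_sdiff.1 (Finset.mem_sdiff.1 h).1).1
    · exact hS (Finset.mem_sdiff.1 h).1
  have hmem : ∀ j ∈ Ht, j ∈ Finset.range (2*k) := fun j hj => hH hj
  have hunion : T1 ∪ T2 = Finset.range (2*k) := by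
    ext j
    simp only [hT1, hT2, hC, Finset.mem_union, Finset.mem_inter, Finset.mem_sdiff]
    constructor
    · tauto
    · intro hj
      by_cases hjH : j ∈ Ht <;> by_cases hjS : j ∈ S <;> tauto
  have hdisj : Disjoint T1 T2 := by
    rw [Finset.disjoint_left]
    intro j hj1 hj2
    simp only [hT1, hT2, hC, Finset.mem_union, Finset.mem_inter, Finset.mem_sdiff] at hj1 hj2
    tauto
  have hsum : ∑ i ∈ Finset.range (2*k), c i = ∑ j ∈ T1, c j + ∑ j ∈ T2, c j := by
    rw [← hunion, Finset.sum_union hdisj]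
  linarith
end

section
/- Suppose c_1 ≥ … ≥ c_n > 0 and 1 ≤ k ≤ n/2. The Searcher strategy choosing ∅ with probability 1/2 + c_{2k}/(2c_1) and the set [j] = {1,…,j} with probability c_{2k}/(2c_{j+1}) − c_{2k}/(2c_j) for each j = 1,…,2k−1 is a well-defined probability distribution, and against it every k-subset H ⊆ [n] incurs expected payoff at most c([2k])/2. Combined with the Hider's guarantee, the value of Γ([n]^(k), 2^[n]) is exactly c([2k])/2. -/
/-!
The Searcher's threshold strategy makes every element `i < 2k` land in her set with probability
`1/2 - c_{2k}/(2 c_i)`, so a Hider element `i ∈ [2k]` costs `c_i/2 + c_{2k}/2` in expectation, an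
element of `[2k] \ H` costs `c_i/2 - c_{2k}/2`, and a Hider element beyond `2k` costs
`c_i ≤ c_{2k}`. With `|H| = k` these contributions add up to at most `c([2k])/2`. Conversely,
splitting `[2k]` into two disjoint halves and hiding in each with probability `1/2`, every element
of `[2k]` lies in exactly one of the two symmetric differences with the Searcher's set.
-/

open Finset

open scoped symmDiff

lemma payoff_eq_sum_ite (c : ℕ → ℝ) {U H S : Finset ℕ} (hH : H ⊆ U) (hS : S ⊆ U) :
    payoff c H S = ∑ i ∈ U, if i ∈ H ∆ S then c i else 0 := by
  have hHS : H ∆ S ⊆ U := fun i hi => by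
    rcases mem_symmDiff.mp hi with h | h
    exacts [hH h.1, hS h.1]
  rw [sum_ite_mem, inter_eq_right.mpr hHS]
  rfl

lemma sum_mul_payoff_eq {ι : Type*} (c : ℕ → ℝ) (s : Finset ι) (p : ι → ℝ) (S : ι → Finset ℕ)
    {U H : Finset ℕ} (hp : ∑ j ∈ s, p j = 1) (hH : H ⊆ U) (hS : ∀ j ∈ s, S j ⊆ U) :
    ∑ j ∈ s, p j * payoff c H (S j) =
      ∑ i ∈ U, c i * if i ∈ H then 1 - ∑ j ∈ s with i ∈ S j, p j
        else ∑ j ∈ s with i ∈ S j, p j := by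
  simp_rw [← hp]
  rw [sum_congr rfl fun j hj => by rw [payoff_eq_sum_ite c hH (hS j hj), mul_sum], sum_comm]
  refine sum_congr rfl fun i _ => ?_
  by_cases hi : i ∈ H <;>
    [rw [if_pos hi, ← sum_filter_add_sum_filter_not s (fun j => i ∈ S j) p, add_sub_cancel_left];
     rw [if_neg hi]] <;>
    rw [sum_filter, mul_sum] <;>
    exact sum_congr rfl fun j _ => by by_cases h : i ∈ S j <;> simp [mem_symmDiff, hi, h, mul_comm]

/-- The Searcher picks `range j` with probability `searcherProb c m j` (`j < m`); `c (m-1)` is the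
paper's `c_{2k}` when `m = 2k`. -/
noncomputable def searcherProb (c : ℕ → ℝ) (m j : ℕ) : ℝ :=
  if j = 0 then 1/2 + c (m-1) / (2 * c 0) else c (m-1) / (2 * c j) - c (m-1) / (2 * c (j-1))

lemma sum_range_succ_searcherProb (c : ℕ → ℝ) (m i : ℕ) :
    ∑ j ∈ range (i + 1), searcherProb c m j = 1/2 + c (m-1) / (2 * c i) := by
  induction i with
  | zero => simp [searcherProb]
  | succ i ih => rw [sum_range_succ, ih, searcherProb, if_neg i.succ_ne_zero]; simp

lemma sum_range_searcherProb {c : ℕ → ℝ} {m : ℕ} (hm : 0 < m) (hc : c (m-1) ≠ 0) :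
    ∑ j ∈ range m, searcherProb c m j = 1 := by
  obtain ⟨i, rfl⟩ := Nat.exists_eq_add_one_of_ne_zero hm.ne'
  rw [Nat.add_sub_cancel] at hc
  rw [sum_range_succ_searcherProb, Nat.add_sub_cancel]
  field_simp
  ring

lemma searcherProb_nonneg {n m j : ℕ} {c : ℕ → ℝ} (hpos : ∀ i < n, 0 < c i)
    (hsort : ∀ i j, i ≤ j → j < n → c j ≤ c i) (hmn : m ≤ n) (hj : j < m) :
    0 ≤ searcherProb c m j := by
  have ha : 0 < c (m-1) := hpos _ (by omega)
  rcases j with _ | j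
  · have := hpos 0 (by omega)
    rw [searcherProb, if_pos rfl]
    positivity
  · have := hpos (j + 1) (by omega)
    rw [searcherProb, if_neg j.succ_ne_zero, sub_nonneg, Nat.add_sub_cancel]
    gcongr
    exact hsort j (j + 1) j.le_succ (by omega)

lemma sum_filter_mem_range_of_lt (p : ℕ → ℝ) {i m : ℕ} (hi : i < m) :
    ∑ j ∈ range m with i ∈ range j, p j = ∑ j ∈ range m, p j - ∑ j ∈ range (i + 1), p j := by
  have : {j ∈ range m | i ∈ range j} = Ico (i + 1) m := by ext; simp; omega
  rw [this, sum_Ico_eq_sub _ hi]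

lemma filter_mem_range_eq_empty {i m : ℕ} (hi : m ≤ i) : {j ∈ range m | i ∈ range j} = ∅ := by
  ext; simp; omega

/-- The bound is chosen so that its sum over `i < n` depends on `H` only through `#H`. -/
lemma mul_ite_sum_filter_searcherProb_le {n m i : ℕ} {c : ℕ → ℝ} (H : Finset ℕ)
    (hpos : ∀ i < n, 0 < c i) (hsort : ∀ i j, i ≤ j → j < n → c j ≤ c i) (hm : 0 < m)
    (hmn : m ≤ n) (hi : i < n) :
    (c i * if i ∈ H then 1 - ∑ j ∈ range m with i ∈ range j, searcherProb c m j
      else ∑ j ∈ range m with i ∈ range j, searcherProb c m j) ≤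
      (if i ∈ range m then (c i - c (m-1)) / 2 else 0) + if i ∈ H then c (m-1) else 0 := by
  by_cases him : i < m
  · have hci := (hpos i hi).ne'
    rw [sum_filter_mem_range_of_lt _ him, sum_range_searcherProb hm (hpos _ (by omega)).ne',
      sum_range_succ_searcherProb, if_pos (mem_range.mpr him)]
    apply le_of_eq
    split_ifs <;> field_simp <;> ring
  · rw [filter_mem_range_eq_empty (not_lt.mp him), sum_empty,
      if_neg (show i ∉ range m by simpa using him)]
    split_ifs
    · simpa using hsort (m-1) i (by omega) hi
    · simp

lemma sum_searcherProb_mul_payoff_le {n m : ℕ} {c : ℕ → ℝ} {H : Finset ℕ}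
    (hpos : ∀ i < n, 0 < c i) (hsort : ∀ i j, i ≤ j → j < n → c j ≤ c i) (hm : 0 < m)
    (hmn : m ≤ n) (hH : H ⊆ range n) :
    ∑ j ∈ range m, searcherProb c m j * payoff c H (range j) ≤
      (∑ i ∈ range m, c i - m * c (m-1)) / 2 + #H * c (m-1) := by
  rw [sum_mul_payoff_eq c _ _ _ (sum_range_searcherProb hm (hpos _ (by omega)).ne') hH
    fun j hj => range_subset_range.mpr (by simp at hj; omega)]
  calc _ ≤ ∑ i ∈ range n, ((if i ∈ range m then (c i - c (m-1)) / 2 else 0) +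
        if i ∈ H then c (m-1) else 0) :=
        sum_le_sum fun i hi =>
          mul_ite_sum_filter_searcherProb_le H hpos hsort hm hmn (mem_range.mp hi)
    _ = _ := by
      rw [sum_add_distrib, sum_ite_mem, sum_ite_mem, range_inter_range, min_eq_right hmn,
        inter_eq_right.mpr hH, ← sum_div, sum_sub_distrib]
      simp

lemma sum_union_le_payoff_add_payoff {c : ℕ → ℝ} {U H₁ H₂ S : Finset ℕ}
    (hc : ∀ i ∈ U, 0 ≤ c i) (h₁ : H₁ ⊆ U) (h₂ : H₂ ⊆ U) (hS : S ⊆ U) (hd : Disjoint H₁ H₂) :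
    ∑ i ∈ H₁ ∪ H₂, c i ≤ payoff c H₁ S + payoff c H₂ S := by
  have hsub : H₁ ∪ H₂ ⊆ H₁ ∆ S ∪ H₂ ∆ S := fun i hi => by
    have hd' := disjoint_left.mp hd
    simp only [mem_union, mem_symmDiff] at hi ⊢
    grind
  have hc' : ∀ i ∈ H₁ ∆ S ∪ H₂ ∆ S, 0 ≤ c i := fun i hi => hc i (by
    simp only [mem_union, mem_symmDiff] at hi
    rcases hi with (⟨h, -⟩ | ⟨h, -⟩) | (⟨h, -⟩ | ⟨h, -⟩)
    exacts [h₁ h, hS h, h₂ h, hS h])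
  calc ∑ i ∈ H₁ ∪ H₂, c i ≤ ∑ i ∈ H₁ ∆ S ∪ H₂ ∆ S, c i :=
        sum_le_sum_of_subset_of_nonneg hsub fun i hi _ => hc' i hi
    _ ≤ ∑ i ∈ H₁ ∆ S ∪ H₂ ∆ S, c i + ∑ i ∈ H₁ ∆ S ∩ H₂ ∆ S, c i :=
        le_add_of_nonneg_right <| sum_nonneg fun i hi =>
          hc' i (mem_union_left _ (mem_of_mem_inter_left hi))
    _ = payoff c H₁ S + payoff c H₂ S := sum_union_inter

theorem stmt_15 (n k : ℕ) (c : ℕ → ℝ)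
    (hpos : ∀ i < n, 0 < c i)
    (hsort : ∀ i j, i ≤ j → j < n → c j ≤ c i)
    (hk : 1 ≤ k) (hkn : 2*k ≤ n) :
    -- Searcher strategy: choose the set {0,…,j-1} (= range j) with probability p j
    let p : ℕ → ℝ := fun j =>
      if j = 0 then 1/2 + c (2*k-1) / (2 * c 0)
      else c (2*k-1) / (2 * c j) - c (2*k-1) / (2 * c (j-1))
    -- well-defined probability distribution
    ((∀ j < 2*k, 0 ≤ p j) ∧ ∑ j ∈ Finset.range (2*k), p j = 1) ∧
    -- Searcher guarantee: every k-subset H incurs expected payoff at most c([2k])/2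
    (∀ H ⊆ Finset.range n, H.card = k →
      ∑ j ∈ Finset.range (2*k), p j * payoff c H (Finset.range j)
        ≤ (∑ i ∈ Finset.range (2*k), c i) / 2) ∧
    -- Hider guarantee, so that the value is exactly c([2k])/2
    (∃ Ht ⊆ Finset.range (2*k), Ht.card = k ∧
      ∀ S ⊆ Finset.range n,
        (∑ i ∈ Finset.range (2*k), c i) / 2
          ≤ (1/2 : ℝ) * payoff c Ht S
            + (1/2 : ℝ) * payoff c (Finset.range (2*k) \ Ht) S) := by
  intro p
  have h2k : 0 < 2 * k := by omega
  refine ⟨⟨fun j hj => searcherProb_nonneg hpos hsort hkn hj,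
    sum_range_searcherProb h2k (hpos _ (by omega)).ne'⟩, fun H hH hcard => ?_, ?_⟩
  · refine (sum_searcherProb_mul_payoff_le hpos hsort h2k hkn hH).trans_eq ?_
    rw [hcard]
    push_cast
    ring
  · have hk2k : range k ⊆ range (2 * k) := range_subset_range.mpr (by omega)
    have h2kn : range (2 * k) ⊆ range n := range_subset_range.mpr hkn
    refine ⟨range k, hk2k, card_range k, fun S hS => ?_⟩
    have := sum_union_le_payoff_add_payoff (fun i hi => (hpos i (mem_range.mp hi)).le)
      (hk2k.trans h2kn) (sdiff_subset.trans h2kn) hS disjoint_sdiff_self_right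
    rw [union_sdiff_of_subset hk2k] at this
    linarith
end

section
/- Let n ≥ 3, c_1 ≥ … ≥ c_n > 0, and suppose Σ_{i=1}^{n-1} 1/c_i ≥ (n−3)/c_n (i.e., M = n−1 in the threshold definition). Define p_j = 1/2 − (n−2)/(2 c_j Σ_{i=1}^n 1/c_i) for j = 1,…,n. Then each p_j ∈ [0,1], Σ_j p_j = 1, and if both players independently choose a single location with distribution (p_j), the expected payoff Σ_{j≠k} p_j (c_j + c_k) equals V₁ = (1/2)Σ_{i=1}^n c_i − (n−2)²/(2 Σ_{i=1}^n 1/c_i) for every pure Searcher choice k. Hence this symmetric strategy is optimal for both players and V₁ is the value. -/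
open Finset

theorem stmt_17 (n : ℕ) (c : ℕ → ℝ) (hn : 3 ≤ n)
    (hpos : ∀ i < n, 0 < c i)
    (hsort : ∀ i j, i ≤ j → j < n → c j ≤ c i)
    -- the condition making M = n-1 in the threshold definition
    (hM : ((n:ℝ) - 3) / c (n-1) ≤ ∑ i ∈ Finset.range (n-1), 1 / c i) :
    let S : ℝ := ∑ i ∈ Finset.range n, 1 / c i
    let p : ℕ → ℝ := fun j => 1/2 - ((n:ℝ) - 2) / (2 * c j * S)
    let V₁ : ℝ := (∑ i ∈ Finset.range n, c i) / 2 - ((n:ℝ) - 2)^2 / (2 * S)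
    -- well-defined probability distribution
    (∀ j < n, 0 ≤ p j ∧ p j ≤ 1) ∧
    (∑ j ∈ Finset.range n, p j = 1) ∧
    -- the expected payoff against every pure choice k equals V₁,
    -- so the symmetric strategy is optimal for both players and V₁ is the value
    (∀ k < n, ∑ j ∈ (Finset.range n).erase k, p j * (c j + c k) = V₁) := by
  intro S p V₁
  have hn' : (3:ℝ) ≤ (n:ℝ) := by exact_mod_cast hn
  have hS : 0 < S := by
    apply Finset.sum_pos
    · intro i hi
      have := hpos i (Finset.mem_range.mp hi)
      positivity
    · exact ⟨0, Finset.mem_range.mpr (by omega)⟩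
  have hcn : 0 < c (n-1) := hpos _ (by omega)
  -- key bound: (n-2)/c j ≤ S for j < n
  have hkey : ∀ j < n, ((n:ℝ) - 2) / c j ≤ S := by
    intro j hj
    have hcj : 0 < c j := hpos j hj
    have hle : c (n-1) ≤ c j := hsort j (n-1) (by omega) (by omega)
    have h1 : ((n:ℝ) - 2) / c j ≤ ((n:ℝ) - 2) / c (n-1) :=
      div_le_div_of_nonneg_left (by linarith) hcn hle
    have h2 : ((n:ℝ) - 2) / c (n-1) ≤ S := by
      have hsplit : S = (∑ i ∈ Finset.range (n-1), 1 / c i) + 1 / c (n-1) := by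
        have h := Finset.sum_range_succ (fun i => 1 / c i) (n-1)
        rw [show (n-1)+1 = n from by omega] at h
        exact h
      have : ((n:ℝ) - 2) / c (n-1) = ((n:ℝ) - 3) / c (n-1) + 1 / c (n-1) := by
        field_simp; ring
      rw [this, hsplit]
      linarith
    linarith
  -- rewrite of p
  have hrw : ∀ j, p j = 1/2 - ((n:ℝ)-2)/(2*S) * (1 / c j) := by
    intro j
    show 1/2 - ((n:ℝ) - 2) / (2 * c j * S) = _
    rcases eq_or_ne (c j) 0 with h | h
    · simp [h]
    · field_simp
  have hsum : ∑ j ∈ Finset.range n, p j = 1 := by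
    simp only [hrw, Finset.sum_sub_distrib, Finset.sum_const, Finset.card_range,
      ← Finset.mul_sum]
    have h2 : ((n:ℝ)-2)/(2*S) * (∑ i ∈ Finset.range n, 1 / c i) = ((n:ℝ)-2)/2 := by
      show ((n:ℝ)-2)/(2*S) * S = ((n:ℝ)-2)/2
      field_simp
    rw [h2, nsmul_eq_mul]
    ring
  refine ⟨?_, hsum, ?_⟩
  · intro j hj
    have hcj : 0 < c j := hpos j hj
    have h1 := hkey j hj
    constructor
    · show 0 ≤ 1/2 - ((n:ℝ) - 2) / (2 * c j * S)
      have : ((n:ℝ) - 2) ≤ S * c j := (div_le_iff₀ hcj).mp h1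
      rw [sub_nonneg, div_le_div_iff₀ (by positivity) (by norm_num)]
      nlinarith
    · show 1/2 - ((n:ℝ) - 2) / (2 * c j * S) ≤ 1
      have : 0 ≤ ((n:ℝ) - 2) / (2 * c j * S) :=
        div_nonneg (by linarith) (by positivity)
      linarith
  · intro k hk
    have hck : 0 < c k := hpos k hk
    have hpc : ∀ j < n, p j * c j = c j / 2 - ((n:ℝ)-2)/(2*S) := by
      intro j hj
      have hcj : (c j) ≠ 0 := (hpos j hj).ne'
      rw [hrw j]
      field_simp
    have hsum2 : ∑ j ∈ Finset.range n, p j * (c j + c k)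
        = (∑ i ∈ Finset.range n, c i) / 2 - (n:ℝ) * (((n:ℝ)-2)/(2*S)) + c k := by
      have : ∀ j ∈ Finset.range n, p j * (c j + c k) = p j * c j + p j * c k := by
        intro j _; ring
      rw [Finset.sum_congr rfl this, Finset.sum_add_distrib,
        Finset.sum_congr rfl (fun j hj => hpc j (Finset.mem_range.mp hj)),
        Finset.sum_sub_distrib, Finset.sum_const, Finset.card_range,
        ← Finset.sum_mul, hsum, ← Finset.sum_div]
      rw [nsmul_eq_mul]
      ring
    rw [Finset.sum_erase_eq_sub (Finset.mem_range.mpr hk), hsum2]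
    have hpk := hpc k hk
    have : p k * (c k + c k) = 2 * (p k * c k) := by ring
    rw [this, hpk]
    show _ = (∑ i ∈ Finset.range n, c i) / 2 - ((n:ℝ) - 2)^2 / (2*S)
    field_simp
    ring
end

section
/- Let n ≥ 3, c_1 ≥ … ≥ c_n > 0, let M ∈ {2,…,n−2} be maximal with Σ_{i=1}^M 1/c_i ≥ (M−2)/c_n. Define the Hider distribution p_j = 1/2 − c_n/(2c_j) for j ≤ M and p_{M+1} = 1 − Σ_{j≤M} p_j. Then p is a valid probability distribution, and against any pure Searcher strategy k ∈ [n], the expected payoff Σ_{j≠k} p_j(c_j + c_k) is at least V₂ = −(M−2)(c_n + c_{M+1})/2 + (1/2)Σ_{i=1}^M (c_i + c_{M+1}c_n/c_i), with equality when k ∈ {1,…,M} ∪ {n}. -/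
/-!
Against a Hider strategy `p` with `∑ p = 1`, searching at `k` pays `T + (1 - 2 p_k) c_k`, where
`T = ∑ p_j c_j`, and `V₂ = T + c_n`. The strategy `p_j = 1/2 - c_n/(2 c_j)` on the `M` most
expensive locations is chosen so that `(1 - 2 p_k) c_k = c_n` there, and the leftover mass sits on
location `M + 1`. Locations beyond it carry no mass and cost at least `c_n`; at `M + 1` itself the
inequality `(1 - 2 p_{M+1}) c_{M+1} > c_n` is exactly the failure of the threshold condition at
`M + 1`, while `p_{M+1} ≥ 0` is the threshold condition at `M`.
-/

open Finset

theorem sum_erase_mul_add_eq_of_sum_eq_one {ι R : Type*} [DecidableEq ι] [CommRing R]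
    {s : Finset ι} {p : ι → R} (c : ι → R) (hp : ∑ j ∈ s, p j = 1) {k : ι} (hk : k ∈ s) :
    ∑ j ∈ s.erase k, p j * (c j + c k) = ∑ j ∈ s, p j * c j + (1 - 2 * p k) * c k := by
  have hsplit : ∑ j ∈ s, p j * (c j + c k) = ∑ j ∈ s, p j * c j + (∑ j ∈ s, p j) * c k := by
    rw [sum_mul, ← sum_add_distrib]
    exact sum_congr rfl fun j _ => mul_add _ _ _
  rw [sum_erase_eq_sub hk, hsplit, hp]
  ring

/-- The Hider's strategy, with `a` in the role of the smallest cost `c_n` and indices from `0`. -/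
noncomputable def hiderStrategy (a : ℝ) (c : ℕ → ℝ) (M j : ℕ) : ℝ :=
  if j < M then 1/2 - a / (2 * c j)
  else if j = M then 1 - ∑ i ∈ range M, (1/2 - a / (2 * c i))
  else 0

namespace hiderStrategy

variable {a : ℝ} {c : ℕ → ℝ} {M : ℕ}

theorem of_lt {j : ℕ} (hj : j < M) : hiderStrategy a c M j = 1/2 - a / (2 * c j) :=
  if_pos hj

theorem of_gt {j : ℕ} (hj : M < j) : hiderStrategy a c M j = 0 := by
  rw [hiderStrategy, if_neg (by omega), if_neg (by omega)]

theorem self : hiderStrategy a c M M = 1 - M / 2 + a / 2 * ∑ i ∈ range M, 1 / c i := by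
  rw [hiderStrategy, if_neg (lt_irrefl M), if_pos rfl, sum_sub_distrib, sum_const, card_range,
    nsmul_eq_mul, mul_sum]
  have hterm : ∀ i ∈ range M, a / (2 * c i) = a / 2 * (1 / c i) := fun i _ => by ring
  rw [sum_congr rfl hterm]
  ring

theorem one_sub_two_mul_mul_of_lt {j : ℕ} (hj : j < M) (hc : c j ≠ 0) :
    (1 - 2 * hiderStrategy a c M j) * c j = a := by
  rw [of_lt hj]
  field_simp
  ring

theorem nonneg_of_lt {j : ℕ} (hj : j < M) (hc : 0 < c j) (ha : a ≤ c j) :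
    0 ≤ hiderStrategy a c M j := by
  rw [of_lt hj, sub_nonneg, div_le_iff₀ (by positivity)]
  linarith

theorem self_nonneg (ha : 0 < a) (hcond : ((M : ℝ) - 2) / a ≤ ∑ i ∈ range M, 1 / c i) :
    0 ≤ hiderStrategy a c M M := by
  rw [self]
  have := (div_le_iff₀ ha).1 hcond
  linarith

theorem lt_one_sub_two_mul_self_mul (ha : 0 < a) (hb : 0 < c M)
    (hfail : ∑ i ∈ range (M + 1), 1 / c i < ((M : ℝ) - 1) / a) :
    a < (1 - 2 * hiderStrategy a c M M) * c M := by
  rw [sum_range_succ, lt_div_iff₀ ha] at hfail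
  have hscaled := mul_lt_mul_of_pos_right hfail hb
  have hexpand : (∑ i ∈ range M, 1 / c i + 1 / c M) * a * c M
      = a * (∑ i ∈ range M, 1 / c i) * c M + a := by
    field_simp
  rw [self]
  linarith

theorem sum_range_mul {n : ℕ} (hMn : M < n) (f : ℕ → ℝ) :
    ∑ j ∈ range n, hiderStrategy a c M j * f j
      = ∑ j ∈ range M, (1/2 - a / (2 * c j)) * f j + hiderStrategy a c M M * f M := by
  have hvanish : ∀ j ∈ range n, j ∉ range (M + 1) → hiderStrategy a c M j * f j = 0 :=
    fun j _ hj => by rw [of_gt (by simpa using hj), zero_mul]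
  rw [← sum_subset (range_subset_range.2 hMn) hvanish, sum_range_succ]
  congr 1
  exact sum_congr rfl fun j hj => by rw [of_lt (mem_range.1 hj)]

theorem sum_range {n : ℕ} (hMn : M < n) : ∑ j ∈ range n, hiderStrategy a c M j = 1 := by
  simpa [hiderStrategy] using sum_range_mul (a := a) (c := c) hMn 1

theorem sum_range_mul_self_add {n : ℕ} (hMn : M < n) (hc : ∀ i < M, c i ≠ 0) :
    ∑ j ∈ range n, hiderStrategy a c M j * c j + a
      = -((M : ℝ) - 2) * (a + c M) / 2 + (1/2) * ∑ i ∈ range M, (c i + c M * a / c i) := by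
  have hterm : ∀ j ∈ range M, (1/2 - a / (2 * c j)) * c j = c j / 2 - a / 2 := fun j hj => by
    have := hc j (mem_range.1 hj)
    field_simp
  have hlow : ∑ j ∈ range M, (1/2 - a / (2 * c j)) * c j
      = (∑ j ∈ range M, c j) / 2 - M * a / 2 := by
    rw [sum_congr rfl hterm, sum_sub_distrib, sum_div, sum_const, card_range, nsmul_eq_mul]
    ring
  have hV : ∑ i ∈ range M, (c i + c M * a / c i)
      = ∑ i ∈ range M, c i + c M * a * ∑ i ∈ range M, 1 / c i := by
    rw [sum_add_distrib, mul_sum]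
    congr 1
    exact sum_congr rfl fun i _ => by ring
  rw [sum_range_mul hMn, hlow, self, hV]
  ring

end hiderStrategy

theorem stmt_18_general (n M : ℕ) (c : ℕ → ℝ)
    (hpos : ∀ i < n, 0 < c i)
    (hsort : ∀ i j, i ≤ j → j < n → c j ≤ c i)
    (hM2 : 2 ≤ M) (hMn : M ≤ n - 2)
    -- M satisfies the threshold condition
    (hcond : ((M:ℝ) - 2) / c (n-1) ≤ ∑ i ∈ Finset.range M, 1 / c i)
    -- and is maximal in {2,…,n-1} with this property
    (hmax : ∀ M', 2 ≤ M' → M' ≤ n - 1 →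
      ((M':ℝ) - 2) / c (n-1) ≤ (∑ i ∈ Finset.range M', 1 / c i) → M' ≤ M) :
    -- Hider distribution: p j on location j (0-indexed; location M is the (M+1)-st)
    let p : ℕ → ℝ := fun j =>
      if j < M then 1/2 - c (n-1) / (2 * c j)
      else if j = M then 1 - ∑ i ∈ Finset.range M, (1/2 - c (n-1) / (2 * c i))
      else 0
    let V₂ : ℝ := -((M:ℝ) - 2) * (c (n-1) + c M) / 2
      + (1/2) * ∑ i ∈ Finset.range M, (c i + c M * c (n-1) / c i)
    -- valid probability distribution
    (∀ j < n, 0 ≤ p j) ∧ (∑ j ∈ Finset.range n, p j = 1) ∧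
    -- guarantee against every pure Searcher strategy k
    (∀ k < n, V₂ ≤ ∑ j ∈ (Finset.range n).erase k, p j * (c j + c k)) ∧
    -- with equality when k ∈ {1,…,M} ∪ {n} (0-indexed: k < M or k = n-1)
    (∀ k < n, (k < M ∨ k = n - 1) →
      ∑ j ∈ (Finset.range n).erase k, p j * (c j + c k) = V₂) := by
  intro p V₂
  have hp : p = hiderStrategy (c (n - 1)) c M := rfl
  have hV₂ : V₂ = ∑ j ∈ range n, p j * c j + c (n - 1) := by
    rw [hp, hiderStrategy.sum_range_mul_self_add (by omega) fun i hi => (hpos i (by omega)).ne']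
  clear_value p V₂
  subst hp hV₂
  have hmin : ∀ i < n, c (n - 1) ≤ c i := fun i hi => hsort i (n - 1) (by omega) (by omega)
  set p := hiderStrategy (c (n - 1)) c M
  have hpay : ∀ k < n, ∑ j ∈ (range n).erase k, p j * (c j + c k)
      = ∑ j ∈ range n, p j * c j + (1 - 2 * p k) * c k := fun k hk =>
    sum_erase_mul_add_eq_of_sum_eq_one c (hiderStrategy.sum_range (by omega)) (mem_range.2 hk)
  have hfail : ∑ i ∈ range (M + 1), 1 / c i < ((M : ℝ) - 1) / c (n - 1) := by
    by_contra! h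
    have := hmax (M + 1) (by omega) (by omega)
      (by push_cast; rwa [show (M : ℝ) + 1 - 2 = M - 1 by ring])
    omega
  refine ⟨fun j hj => ?_, hiderStrategy.sum_range (by omega), fun k hk => ?_, fun k hk hk' => ?_⟩
  · rcases lt_trichotomy j M with hjM | rfl | hjM
    · exact hiderStrategy.nonneg_of_lt hjM (hpos j hj) (hmin j hj)
    · exact hiderStrategy.self_nonneg (hpos _ (by omega)) hcond
    · exact (hiderStrategy.of_gt hjM).ge
  · rw [hpay k hk, add_le_add_iff_left]
    rcases lt_trichotomy k M with hkM | rfl | hkM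
    · exact (hiderStrategy.one_sub_two_mul_mul_of_lt hkM (hpos k hk).ne').ge
    · exact (hiderStrategy.lt_one_sub_two_mul_self_mul (hpos _ (by omega)) (hpos k hk) hfail).le
    · rw [show p k = 0 from hiderStrategy.of_gt hkM]
      simpa using hmin k hk
  · rw [hpay k hk]
    rcases hk' with hkM | rfl
    · rw [hiderStrategy.one_sub_two_mul_mul_of_lt hkM (hpos k hk).ne']
    · rw [show p (n - 1) = 0 from hiderStrategy.of_gt (by omega)]
      ring

theorem stmt_18 (n M : ℕ) (c : ℕ → ℝ) (hn : 3 ≤ n)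
    (hpos : ∀ i < n, 0 < c i)
    (hsort : ∀ i j, i ≤ j → j < n → c j ≤ c i)
    (hM2 : 2 ≤ M) (hMn : M ≤ n - 2)
    -- M satisfies the threshold condition
    (hcond : ((M:ℝ) - 2) / c (n-1) ≤ ∑ i ∈ Finset.range M, 1 / c i)
    -- and is maximal in {2,…,n-1} with this property
    (hmax : ∀ M', 2 ≤ M' → M' ≤ n - 1 →
      ((M':ℝ) - 2) / c (n-1) ≤ (∑ i ∈ Finset.range M', 1 / c i) → M' ≤ M) :
    -- Hider distribution: p j on location j (0-indexed; location M is the (M+1)-st)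
    let p : ℕ → ℝ := fun j =>
      if j < M then 1/2 - c (n-1) / (2 * c j)
      else if j = M then 1 - ∑ i ∈ Finset.range M, (1/2 - c (n-1) / (2 * c i))
      else 0
    let V₂ : ℝ := -((M:ℝ) - 2) * (c (n-1) + c M) / 2
      + (1/2) * ∑ i ∈ Finset.range M, (c i + c M * c (n-1) / c i)
    -- valid probability distribution
    (∀ j < n, 0 ≤ p j) ∧ (∑ j ∈ Finset.range n, p j = 1) ∧
    -- guarantee against every pure Searcher strategy k
    (∀ k < n, V₂ ≤ ∑ j ∈ (Finset.range n).erase k, p j * (c j + c k)) ∧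
    -- with equality when k ∈ {1,…,M} ∪ {n} (0-indexed: k < M or k = n-1)
    (∀ k < n, (k < M ∨ k = n - 1) →
      ∑ j ∈ (Finset.range n).erase k, p j * (c j + c k) = V₂) :=
  stmt_18_general n M c hpos hsort hM2 hMn hcond hmax
end
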